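/- arXiv:2111.14006 — 4 statements merged into one kernel-verified Lean document; each statement's English description precedes it below -/
import Mathlib

section
/- (Proposition 3.1) If the Lanczos L-biorthogonalization data up to step m exists (in particular no breakdown occurs, δ_{j+1} ≠ 0 and β_{j+1} ≠ 0 for j = 1,…,m), then the produced tensors are L-biorthogonal: ⟨W_i, L(V_j)⟩ = 1 if i = j and ⟨W_i, L(V_j)⟩ = 0 if i ≠ j, for all 1 ≤ i, j ≤ m. -/
open scoped Matrix

/-- A tensor in `ℝ^{I₁ × ⋯ × I_N}`: a real-valued function on multi-indices. -/
abbrev Tensor {N : ℕ} (I : Fin N → ℕ) := (∀ n, Fin (I n)) → ℝ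

/-- Inner product `⟨X, Y⟩ = ∑ᵢ X(i) Y(i)`. -/
noncomputable def tinner {N : ℕ} {I : Fin N → ℕ} (X Y : Tensor I) : ℝ :=
  ∑ i : ∀ n, Fin (I n), X i * Y i

/-- Norm `‖X‖ = ⟨X, X⟩^{1/2}`. -/
noncomputable def tnorm {N : ℕ} {I : Fin N → ℕ} (X : Tensor I) : ℝ :=
  Real.sqrt (tinner X X)

/-- The Sylvester operator `L(X) = X ×₁ A₁ + ⋯ + X ×_N A_N`. -/
noncomputable def sylvOp {N : ℕ} {I : Fin N → ℕ}
    (A : ∀ n, Matrix (Fin (I n)) (Fin (I n)) ℝ) (X : Tensor I) : Tensor I :=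
  fun i => ∑ n : Fin N, ∑ j : Fin (I n), A n (i n) j * X (Function.update i n j)

/-- The transposed Sylvester operator `L^T`, with each `Aₙ` replaced by `Aₙᵀ`. -/
noncomputable def sylvOpT {N : ℕ} {I : Fin N → ℕ}
    (A : ∀ n, Matrix (Fin (I n)) (Fin (I n)) ℝ) : Tensor I → Tensor I :=
  sylvOp (fun n => (A n)ᵀ)

/-- The Lanczos `L`-biorthogonalization data up to step `m` (Algorithm 1),
with no breakdown: `δ_{j+1} ≠ 0` and `β_{j+1} ≠ 0` for `j = 1,…,m`. -/
structure LanczosData {N : ℕ} {I : Fin N → ℕ}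
    (A : ∀ n, Matrix (Fin (I n)) (Fin (I n)) ℝ) (m : ℕ) where
  V : ℕ → Tensor I
  W : ℕ → Tensor I
  Vb : ℕ → Tensor I
  Wb : ℕ → Tensor I
  α : ℕ → ℝ
  δ : ℕ → ℝ
  β : ℕ → ℝ
  hV0 : V 0 = 0
  hW0 : W 0 = 0
  hδ1 : δ 1 = 0
  hβ1 : β 1 = 0
  hWLV1 : tinner (W 1) (sylvOp A (V 1)) = 1
  hα : ∀ j, 1 ≤ j → j ≤ m →
    α j = tinner (sylvOp A (sylvOp A (V j))) (W j)
  hVb : ∀ j, 1 ≤ j → j ≤ m →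
    Vb (j + 1) = sylvOp A (V j) - α j • V j - β j • V (j - 1)
  hWb : ∀ j, 1 ≤ j → j ≤ m →
    Wb (j + 1) = sylvOpT A (W j) - α j • W j - δ j • W (j - 1)
  hδ : ∀ j, 1 ≤ j → j ≤ m →
    δ (j + 1) = Real.sqrt |tinner (Wb (j + 1)) (sylvOp A (Vb (j + 1)))|
  hδne : ∀ j, 1 ≤ j → j ≤ m → δ (j + 1) ≠ 0
  hβ : ∀ j, 1 ≤ j → j ≤ m →
    β (j + 1) = tinner (Wb (j + 1)) (sylvOp A (Vb (j + 1))) / δ (j + 1)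
  hβne : ∀ j, 1 ≤ j → j ≤ m → β (j + 1) ≠ 0
  hVnext : ∀ j, 1 ≤ j → j ≤ m → V (j + 1) = (δ (j + 1))⁻¹ • Vb (j + 1)
  hWnext : ∀ j, 1 ≤ j → j ≤ m → W (j + 1) = (β (j + 1))⁻¹ • Wb (j + 1)

section Lanczos

variable {N : ℕ} {I : Fin N → ℕ} {A : ∀ n, Matrix (Fin (I n)) (Fin (I n)) ℝ} {m : ℕ}

/- ### Bilinearity lemmas -/

lemma tinner_comm' (X Y : Tensor I) : tinner X Y = tinner Y X :=
  Finset.sum_congr rfl fun _ _ => mul_comm _ _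

lemma tinner_smul_left' (c : ℝ) (X Y : Tensor I) : tinner (c • X) Y = c * tinner X Y := by
  unfold tinner; rw [Finset.mul_sum]
  exact Finset.sum_congr rfl fun i _ => by simp [mul_assoc]

lemma tinner_smul_right' (c : ℝ) (X Y : Tensor I) : tinner X (c • Y) = c * tinner X Y := by
  rw [tinner_comm', tinner_smul_left', tinner_comm']

lemma tinner_sub_left' (X Y Z : Tensor I) : tinner (X - Y) Z = tinner X Z - tinner Y Z := by
  unfold tinner; rw [← Finset.sum_sub_distrib]
  exact Finset.sum_congr rfl fun i _ => by simp [sub_mul]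

lemma tinner_sub_right' (X Y Z : Tensor I) : tinner X (Y - Z) = tinner X Y - tinner X Z := by
  rw [tinner_comm', tinner_sub_left', tinner_comm' Y X, tinner_comm' Z X]

lemma tinner_add_left' (X Y Z : Tensor I) : tinner (X + Y) Z = tinner X Z + tinner Y Z := by
  unfold tinner; rw [← Finset.sum_add_distrib]
  exact Finset.sum_congr rfl fun i _ => by simp [add_mul]

lemma tinner_add_right' (X Y Z : Tensor I) : tinner X (Y + Z) = tinner X Y + tinner X Z := by
  rw [tinner_comm', tinner_add_left', tinner_comm' Y X, tinner_comm' Z X]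

lemma tinner_zero_left' (Y : Tensor I) : tinner (0 : Tensor I) Y = 0 := by
  unfold tinner; simp

lemma tinner_zero_right' (X : Tensor I) : tinner X (0 : Tensor I) = 0 := by
  rw [tinner_comm', tinner_zero_left']

lemma sylvOp_smul' (c : ℝ) (X : Tensor I) : sylvOp A (c • X) = c • sylvOp A X := by
  funext i; simp [sylvOp, Finset.mul_sum, mul_left_comm]

lemma sylvOp_add' (X Y : Tensor I) : sylvOp A (X + Y) = sylvOp A X + sylvOp A Y := by
  funext i; simp [sylvOp, mul_add, Finset.sum_add_distrib]

lemma sylvOp_sub' (X Y : Tensor I) : sylvOp A (X - Y) = sylvOp A X - sylvOp A Y := by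
  funext i; simp [sylvOp, mul_sub, Finset.sum_sub_distrib]

lemma sylvOp_zero' : sylvOp A (0 : Tensor I) = 0 := by
  funext i; simp [sylvOp]

/- ### Adjointness of the Sylvester operator -/

set_option maxHeartbeats 1000000 in
lemma tinner_sylvOpT' (W Z : Tensor I) :
    tinner (sylvOpT A W) Z = tinner W (sylvOp A Z) := by
  unfold tinner sylvOpT sylvOp
  simp only [Matrix.transpose_apply, Finset.sum_mul, Finset.mul_sum]
  rw [Finset.sum_comm]
  conv_rhs => rw [Finset.sum_comm]
  refine Finset.sum_congr rfl fun n _ => ?_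
  have hinv : Function.Involutive
      (fun p : (∀ k, Fin (I k)) × Fin (I n) => (Function.update p.1 n p.2, p.1 n)) := by
    intro p
    simp [Function.update_self, Function.update_idem, Function.update_eq_self]
  calc ∑ x : ∀ k, Fin (I k), ∑ i : Fin (I n), A n i (x n) * W (Function.update x n i) * Z x
      = ∑ p : (∀ k, Fin (I k)) × Fin (I n),
          A n p.2 (p.1 n) * W (Function.update p.1 n p.2) * Z p.1 :=
        (Fintype.sum_prod_type (f := fun p : (∀ k, Fin (I k)) × Fin (I n) =>
          A n p.2 (p.1 n) * W (Function.update p.1 n p.2) * Z p.1)).symm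
    _ = ∑ p : (∀ k, Fin (I k)) × Fin (I n),
          W p.1 * (A n (p.1 n) p.2 * Z (Function.update p.1 n p.2)) := by
        refine Fintype.sum_bijective _ hinv.bijective _ _ fun p => ?_
        simp only [Function.update_self, Function.update_idem, Function.update_eq_self]
        ring
    _ = ∑ x : ∀ k, Fin (I k), ∑ i : Fin (I n), W x * (A n (x n) i * Z (Function.update x n i)) :=
        Fintype.sum_prod_type (f := fun p : (∀ k, Fin (I k)) × Fin (I n) =>
          W p.1 * (A n (p.1 n) p.2 * Z (Function.update p.1 n p.2)))

/- ### Abbreviations -/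

noncomputable def LanczosData.T (L : LanczosData A m) (i j : ℕ) : ℝ :=
  tinner (L.W i) (sylvOp A (L.V j))

noncomputable def LanczosData.S (L : LanczosData A m) (i j : ℕ) : ℝ :=
  tinner (L.W i) (sylvOp A (sylvOp A (L.V j)))

variable (L : LanczosData A m)

lemma LanczosData.T_zero_right (i : ℕ) : L.T i 0 = 0 := by
  simp [LanczosData.T, L.hV0, sylvOp_zero', tinner_zero_right']

lemma LanczosData.T_zero_left (j : ℕ) : L.T 0 j = 0 := by
  simp [LanczosData.T, L.hW0, tinner_zero_left']

/- ### Three-term recurrences -/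

lemma LanczosData.Vrec {j : ℕ} (h1 : 1 ≤ j) (hm : j ≤ m) :
    sylvOp A (L.V j) = L.δ (j+1) • L.V (j+1) + L.α j • L.V j + L.β j • L.V (j-1) := by
  have hd : L.δ (j+1) • L.V (j+1) = L.Vb (j+1) := by
    rw [L.hVnext j h1 hm, smul_smul, mul_inv_cancel₀ (L.hδne j h1 hm), one_smul]
  rw [hd, L.hVb j h1 hm]; abel

lemma LanczosData.Wrec {j : ℕ} (h1 : 1 ≤ j) (hm : j ≤ m) :
    sylvOpT A (L.W j) = L.β (j+1) • L.W (j+1) + L.α j • L.W j + L.δ j • L.W (j-1) := by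
  have hd : L.β (j+1) • L.W (j+1) = L.Wb (j+1) := by
    rw [L.hWnext j h1 hm, smul_smul, mul_inv_cancel₀ (L.hβne j h1 hm), one_smul]
  rw [hd, L.hWb j h1 hm]; abel

lemma LanczosData.S_right (i : ℕ) {j : ℕ} (h1 : 1 ≤ j) (hm : j ≤ m) :
    L.S i j = L.δ (j+1) * L.T i (j+1) + L.α j * L.T i j + L.β j * L.T i (j-1) := by
  simp only [LanczosData.S, LanczosData.T]
  conv_lhs => rw [L.Vrec h1 hm]
  rw [sylvOp_add', sylvOp_add', sylvOp_smul', sylvOp_smul', sylvOp_smul',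
      tinner_add_right', tinner_add_right', tinner_smul_right', tinner_smul_right',
      tinner_smul_right']

lemma LanczosData.S_left {i : ℕ} (j : ℕ) (h1 : 1 ≤ i) (hm : i ≤ m) :
    L.S i j = L.β (i+1) * L.T (i+1) j + L.α i * L.T i j + L.δ i * L.T (i-1) j := by
  simp only [LanczosData.S, LanczosData.T]
  rw [← tinner_sylvOpT', L.Wrec h1 hm, tinner_add_left', tinner_add_left',
      tinner_smul_left', tinner_smul_left', tinner_smul_left']

lemma LanczosData.S_diag {j : ℕ} (h1 : 1 ≤ j) (hm : j ≤ m) : L.S j j = L.α j := by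
  simp only [LanczosData.S]
  rw [tinner_comm']; exact (L.hα j h1 hm).symm

lemma LanczosData.T_exp_left {k : ℕ} (j : ℕ) (h1 : 1 ≤ k) (hm : k ≤ m) :
    L.T (k+1) j = (L.β (k+1))⁻¹ * (L.S k j - L.α k * L.T k j - L.δ k * L.T (k-1) j) := by
  simp only [LanczosData.S, LanczosData.T]
  rw [L.hWnext k h1 hm, tinner_smul_left', L.hWb k h1 hm, tinner_sub_left', tinner_sub_left',
      tinner_smul_left', tinner_smul_left', tinner_sylvOpT']

lemma LanczosData.T_exp_right (i : ℕ) {k : ℕ} (h1 : 1 ≤ k) (hm : k ≤ m) :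
    L.T i (k+1) = (L.δ (k+1))⁻¹ * (L.S i k - L.α k * L.T i k - L.β k * L.T i (k-1)) := by
  simp only [LanczosData.S, LanczosData.T]
  rw [L.hVnext k h1 hm, sylvOp_smul', tinner_smul_right', L.hVb k h1 hm,
      sylvOp_sub', sylvOp_sub', sylvOp_smul', sylvOp_smul',
      tinner_sub_right', tinner_sub_right', tinner_smul_right', tinner_smul_right']

/- ### The key induction -/

lemma LanczosData.key : ∀ k, k ≤ m → ∀ i j, 1 ≤ i → i ≤ k → 1 ≤ j → j ≤ k →
    L.T i j = if i = j then 1 else 0 := by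
  intro k
  induction k with
  | zero => intro _ i j hi1 hik; omega
  | succ k ih =>
    intro hkm1 i j hi1 hik hj1 hjk
    rcases Nat.eq_zero_or_pos k with rfl | hk1
    · -- base: k + 1 = 1, so i = j = 1
      have hi : i = 1 := by omega
      have hj : j = 1 := by omega
      subst hi; subst hj
      simpa [LanczosData.T] using L.hWLV1
    have hkm : k ≤ m := by omega
    have IH := ih hkm
    -- T (k+1) j = 0 for 1 ≤ j ≤ k
    have hA : ∀ j, 1 ≤ j → j ≤ k → L.T (k+1) j = 0 := by
      intro j hj1 hjk
      rw [L.T_exp_left j hk1 hkm]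
      rcases eq_or_lt_of_le hjk with rfl | hjlt
      · -- j = k
        have h1 : L.T j j = 1 := by rw [IH j j hj1 le_rfl hj1 le_rfl]; simp
        have h2 : L.T (j-1) j = 0 := by
          rcases Nat.lt_or_ge 1 j with h | h
          · rw [IH (j-1) j (by omega) (by omega) hj1 le_rfl]
            simp [show j - 1 ≠ j by omega]
          · have : j = 1 := by omega
            subst this
            simpa using L.T_zero_left 1
        rw [L.S_diag hj1 hkm, h1, h2]; ring
      · -- j < k
        have h1 : L.T k (j+1) = if k = j+1 then 1 else 0 :=
          IH k (j+1) hk1 le_rfl (by omega) (by omega)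
        have h2 : L.T k j = 0 := by
          rw [IH k j hk1 le_rfl hj1 (by omega)]; simp [show k ≠ j by omega]
        have h3 : L.T k (j-1) = 0 := by
          rcases Nat.lt_or_ge 1 j with h | h
          · rw [IH k (j-1) hk1 le_rfl (by omega) (by omega)]
            simp [show k ≠ j - 1 by omega]
          · have : j = 1 := by omega
            subst this
            simpa using L.T_zero_right k
        have h4 : L.T (k-1) j = if k-1 = j then 1 else 0 :=
          IH (k-1) j (by omega) (by omega) hj1 (by omega)
        rw [L.S_right k hj1 (by omega), h1, h2, h3, h4]
        by_cases hc : k = j + 1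
        · have hc' : k - 1 = j := by omega
          rw [if_pos hc, if_pos hc', ← hc]
          ring
        · rw [if_neg hc, if_neg (show k - 1 ≠ j by omega)]
          ring
    -- T i (k+1) = 0 for 1 ≤ i ≤ k
    have hB : ∀ i, 1 ≤ i → i ≤ k → L.T i (k+1) = 0 := by
      intro i hi1 hik
      rw [L.T_exp_right i hk1 hkm]
      rcases eq_or_lt_of_le hik with rfl | hilt
      · have h1 : L.T i i = 1 := by rw [IH i i hi1 le_rfl hi1 le_rfl]; simp
        have h2 : L.T i (i-1) = 0 := by
          rcases Nat.lt_or_ge 1 i with h | h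
          · rw [IH i (i-1) hi1 le_rfl (by omega) (by omega)]
            simp [show i ≠ i - 1 by omega]
          · have : i = 1 := by omega
            subst this
            simpa using L.T_zero_right 1
        rw [L.S_diag hi1 hkm, h1, h2]; ring
      · have h1 : L.T (i+1) k = if i+1 = k then 1 else 0 :=
          IH (i+1) k (by omega) (by omega) hk1 le_rfl
        have h2 : L.T i k = 0 := by
          rw [IH i k hi1 (by omega) hk1 le_rfl]; simp [show i ≠ k by omega]
        have h3 : L.T (i-1) k = 0 := by
          rcases Nat.lt_or_ge 1 i with h | h
          · rw [IH (i-1) k (by omega) (by omega) hk1 le_rfl]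
            simp [show i - 1 ≠ k by omega]
          · have : i = 1 := by omega
            subst this
            simpa using L.T_zero_left k
        have h4 : L.T i (k-1) = if i = k-1 then 1 else 0 :=
          IH i (k-1) hi1 (by omega) (by omega) (by omega)
        rw [L.S_left k hi1 (by omega), h1, h2, h3, h4]
        by_cases hc : i + 1 = k
        · have hc' : i = k - 1 := by omega
          rw [if_pos hc, if_pos hc', hc]
          ring
        · rw [if_neg hc, if_neg (show i ≠ k - 1 by omega)]
          ring
    -- T (k+1) (k+1) = 1
    have hC : L.T (k+1) (k+1) = 1 := by
      have hq : tinner (L.Wb (k+1)) (sylvOp A (L.Vb (k+1))) = L.β (k+1) * L.δ (k+1) := by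
        have h := L.hβ k hk1 hkm
        rw [eq_div_iff (L.hδne k hk1 hkm)] at h
        exact h.symm
      simp only [LanczosData.T]
      rw [L.hWnext k hk1 hkm, L.hVnext k hk1 hkm, tinner_smul_left', sylvOp_smul',
          tinner_smul_right', hq]
      field_simp
      exact div_self (mul_ne_zero (L.hβne k hk1 hkm) (L.hδne k hk1 hkm))
    -- combine
    by_cases hi : i = k + 1 <;> by_cases hj : j = k + 1
    · subst hi; subst hj; simpa using hC
    · subst hi
      rw [if_neg (by omega)]
      exact hA j hj1 (by omega)
    · subst hj
      rw [if_neg (by omega)]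
      exact hB i hi1 (by omega)
    · exact IH i j hi1 (by omega) hj1 (by omega)

end Lanczos

/-- Proposition 3.1: the Lanczos tensors are `L`-biorthogonal:
`⟨W_i, L(V_j)⟩ = δ_{ij}` for `1 ≤ i, j ≤ m`. -/
theorem lanczos_biorthogonal {N : ℕ} (hN : 1 ≤ N) (I : Fin N → ℕ) (hI : ∀ n, 0 < I n)
    (A : ∀ n, Matrix (Fin (I n)) (Fin (I n)) ℝ) (m : ℕ)
    (L : LanczosData A m) (i j : ℕ) (hi1 : 1 ≤ i) (him : i ≤ m)
    (hj1 : 1 ≤ j) (hjm : j ≤ m) :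
    tinner (L.W i) (sylvOp A (L.V j)) = if i = j then 1 else 0 :=
  L.key m le_rfl i j hi1 him hj1 hjm
end

section
/- (Galerkin condition of TLB) Suppose the Lanczos L-biorthogonalization data up to step m exists, D and X_0 are tensors, R_0 = D − L(X_0) ≠ 0, and V_1 = R_0/‖R_0‖. Then for any y ∈ ℝ^m, the orthogonality conditions ⟨D − L(X_0 + Σ_{k=1}^m y_k V_k), L^T(W_i)⟩ = 0 for all i = 1,…,m hold if and only if y solves the tridiagonal system T_m y = ‖R_0‖ e_1, i.e., Σ_{k=1}^m (T_m)_{ik} y_k = ‖R_0‖ if i = 1 and = 0 if 2 ≤ i ≤ m. -/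
open scoped Matrix

namespace TLBaux

variable {N : ℕ} {I : Fin N → ℕ}

lemma tinner_comm (X Y : Tensor I) : tinner X Y = tinner Y X := by
  unfold tinner; exact Finset.sum_congr rfl fun i _ => mul_comm _ _

lemma tinner_sub_left (X Y Z : Tensor I) :
    tinner (X - Y) Z = tinner X Z - tinner Y Z := by
  unfold tinner
  rw [← Finset.sum_sub_distrib]
  exact Finset.sum_congr rfl fun i _ => by simp [sub_mul]

lemma tinner_smul_left (c : ℝ) (X Y : Tensor I) :
    tinner (c • X) Y = c * tinner X Y := by
  unfold tinner
  rw [Finset.mul_sum]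
  exact Finset.sum_congr rfl fun i _ => by simp [mul_assoc]

lemma tinner_sum_left {m : ℕ} (f : Fin m → Tensor I) (Y : Tensor I) :
    tinner (∑ k, f k) Y = ∑ k, tinner (f k) Y := by
  unfold tinner
  rw [Finset.sum_comm]
  exact Finset.sum_congr rfl fun i _ => by simp [Finset.sum_mul]

lemma tinner_zero_left (Y : Tensor I) : tinner (0 : Tensor I) Y = 0 := by
  simp [tinner]

lemma tnorm_ne_zero {X : Tensor I} (h : X ≠ 0) : tnorm X ≠ 0 := by
  have hpos : 0 < tinner X X := by
    rcases Function.ne_iff.mp h with ⟨i, hi⟩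
    refine Finset.sum_pos' (fun j _ => mul_self_nonneg _) ⟨i, Finset.mem_univ i, ?_⟩
    exact mul_self_pos.mpr hi
  simp only [tnorm]
  positivity

lemma sylv_sub (A : ∀ n, Matrix (Fin (I n)) (Fin (I n)) ℝ) (X Y : Tensor I) :
    sylvOp A (X - Y) = sylvOp A X - sylvOp A Y := by
  funext i
  simp [sylvOp, mul_sub, Finset.sum_sub_distrib]

lemma sylv_add (A : ∀ n, Matrix (Fin (I n)) (Fin (I n)) ℝ) (X Y : Tensor I) :
    sylvOp A (X + Y) = sylvOp A X + sylvOp A Y := by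
  funext i
  simp [sylvOp, mul_add, Finset.sum_add_distrib]

lemma sylv_smul (A : ∀ n, Matrix (Fin (I n)) (Fin (I n)) ℝ) (c : ℝ) (X : Tensor I) :
    sylvOp A (c • X) = c • sylvOp A X := by
  funext i
  simp [sylvOp, Finset.mul_sum, mul_left_comm]

lemma sylv_zero (A : ∀ n, Matrix (Fin (I n)) (Fin (I n)) ℝ) :
    sylvOp A (0 : Tensor I) = 0 := by
  funext i; simp [sylvOp]

lemma sylv_sum (A : ∀ n, Matrix (Fin (I n)) (Fin (I n)) ℝ) {m : ℕ} (f : Fin m → Tensor I) :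
    sylvOp A (∑ k, f k) = ∑ k, sylvOp A (f k) := by
  funext i
  simp only [sylvOp, Finset.sum_apply, Finset.mul_sum]
  rw [Finset.sum_comm]
  refine Finset.sum_congr rfl fun n _ => ?_
  rw [Finset.sum_comm]

lemma sylv_adjoint (A : ∀ n, Matrix (Fin (I n)) (Fin (I n)) ℝ) (X Y : Tensor I) :
    tinner (sylvOp A X) Y = tinner X (sylvOpT A Y) := by
  unfold tinner sylvOpT sylvOp
  simp only [Finset.sum_mul, Finset.mul_sum]
  rw [Finset.sum_comm]
  conv_rhs => rw [Finset.sum_comm]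
  refine Finset.sum_congr rfl fun n _ => ?_
  rw [← Finset.sum_product', ← Finset.sum_product']
  refine Finset.sum_nbij' (fun p => (Function.update p.1 n p.2, p.1 n))
    (fun p => (Function.update p.1 n p.2, p.1 n)) ?_ ?_ ?_ ?_ ?_
  · intros; exact Finset.mem_univ _
  · intros; exact Finset.mem_univ _
  · rintro ⟨i, j⟩ _
    simp [Function.update_idem, Function.update_eq_self]
  · rintro ⟨i, j⟩ _
    simp [Function.update_idem, Function.update_eq_self]
  · rintro ⟨i, j⟩ _
    simp only [Matrix.transpose_apply, Function.update_self, Function.update_idem,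
      Function.update_eq_self]
    ring

lemma tinner_add_left (X Y Z : Tensor I) :
    tinner (X + Y) Z = tinner X Z + tinner Y Z := by
  unfold tinner
  rw [← Finset.sum_add_distrib]
  exact Finset.sum_congr rfl fun i _ => by simp [add_mul]

lemma tinner_add_right (X Y Z : Tensor I) :
    tinner X (Y + Z) = tinner X Y + tinner X Z := by
  rw [tinner_comm, tinner_add_left, tinner_comm Y X, tinner_comm Z X]

lemma tinner_sub_right (X Y Z : Tensor I) :
    tinner X (Y - Z) = tinner X Y - tinner X Z := by
  rw [tinner_comm, tinner_sub_left, tinner_comm Y X, tinner_comm Z X]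

lemma tinner_smul_right (c : ℝ) (X Y : Tensor I) :
    tinner X (c • Y) = c * tinner X Y := by
  rw [tinner_comm, tinner_smul_left, tinner_comm Y X]

lemma tinner_zero_right (X : Tensor I) : tinner X (0 : Tensor I) = 0 := by
  simp [tinner]

lemma sylvT_adjoint (A : ∀ n, Matrix (Fin (I n)) (Fin (I n)) ℝ) (X Y : Tensor I) :
    tinner (sylvOpT A X) Y = tinner X (sylvOp A Y) := by
  have h := sylv_adjoint (fun n => (A n)ᵀ) X Y
  simp only [sylvOpT, Matrix.transpose_transpose] at h ⊢
  exact h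

end TLBaux

namespace TLBaux

variable {N : ℕ} {I : Fin N → ℕ} {A : ∀ n, Matrix (Fin (I n)) (Fin (I n)) ℝ} {m : ℕ}

lemma fact_LV (L : LanczosData A m) {j : ℕ} (h1 : 1 ≤ j) (h2 : j ≤ m) :
    sylvOp A (L.V j) =
      L.δ (j+1) • L.V (j+1) + L.α j • L.V j + L.β j • L.V (j-1) := by
  have hv := L.hVnext j h1 h2
  have hb := L.hVb j h1 h2
  have hδ := L.hδne j h1 h2
  have h3 : L.δ (j+1) • L.V (j+1) = L.Vb (j+1) := by
    rw [hv, smul_smul, mul_inv_cancel₀ hδ, one_smul]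
  rw [h3, hb]; abel

lemma fact_LTW (L : LanczosData A m) {j : ℕ} (h1 : 1 ≤ j) (h2 : j ≤ m) :
    sylvOpT A (L.W j) =
      L.β (j+1) • L.W (j+1) + L.α j • L.W j + L.δ j • L.W (j-1) := by
  have hv := L.hWnext j h1 h2
  have hb := L.hWb j h1 h2
  have hβ := L.hβne j h1 h2
  have h3 : L.β (j+1) • L.W (j+1) = L.Wb (j+1) := by
    rw [hv, smul_smul, mul_inv_cancel₀ hβ, one_smul]
  rw [h3, hb]; abel

lemma biortho (L : LanczosData A m) :
    ∀ n, n ≤ m → ∀ i j, 1 ≤ i → i ≤ n + 1 → 1 ≤ j → j ≤ n + 1 →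
      tinner (L.W i) (sylvOp A (L.V j)) = if i = j then 1 else 0 := by
  intro n
  induction n with
  | zero =>
    intro _ i j hi1 hi2 hj1 hj2
    have hi : i = 1 := le_antisymm hi2 hi1
    have hj : j = 1 := le_antisymm hj2 hj1
    subst hi; subst hj
    simp [L.hWLV1]
  | succ n IH =>
    intro hnm i j hi1 hi2 hj1 hj2
    have hpm : n + 1 ≤ m := hnm
    have hp1 : 1 ≤ n + 1 := by omega
    have IH' : ∀ i j, 1 ≤ i → i ≤ n + 1 → 1 ≤ j → j ≤ n + 1 →
        tinner (L.W i) (sylvOp A (L.V j)) = if i = j then 1 else 0 :=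
      IH (by omega)
    -- key2 : ⟨W i, L V ((n+1)+1)⟩ = 0 for 1 ≤ i ≤ (n+1)
    have key2 : ∀ i, 1 ≤ i → i ≤ (n+1) → tinner (L.W i) (sylvOp A (L.V ((n+1)+1))) = 0 := by
      intro i hi1' hip
      rw [L.hVnext (n+1) hp1 hpm, sylv_smul, tinner_smul_right, L.hVb (n+1) hp1 hpm,
        sylv_sub, sylv_sub, sylv_smul, sylv_smul, tinner_sub_right, tinner_sub_right,
        tinner_smul_right, tinner_smul_right]
      rcases eq_or_lt_of_le hip with hie | hlt
      · -- i = (n+1)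
        rw [← hie]
        have him : i ≤ m := by omega
        have t1 : tinner (L.W i) (sylvOp A (sylvOp A (L.V i))) = L.α i := by
          rw [tinner_comm]; exact (L.hα i hi1' him).symm
        have t2 : tinner (L.W i) (sylvOp A (L.V i)) = 1 := by
          rw [IH' i i hi1' hip hi1' hip, if_pos rfl]
        have t3 : L.β i * tinner (L.W i) (sylvOp A (L.V (i-1))) = 0 := by
          rcases eq_or_lt_of_le hi1' with h1 | h1
          · rw [← h1, L.hβ1, zero_mul]
          · have : tinner (L.W i) (sylvOp A (L.V (i-1))) = 0 := by
              rw [IH' i (i-1) hi1' hip (by omega) (by omega), if_neg (by omega)]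
            rw [this, mul_zero]
        rw [t1, t2, t3]; ring
      · -- i < (n+1)
        have hipm : i ≤ m := by omega
        have hA2 : tinner (L.W i) (sylvOp A (sylvOp A (L.V (n+1)))) =
            L.β (i+1) * (if i + 1 = (n+1) then 1 else 0) := by
          rw [← sylvT_adjoint, fact_LTW L hi1' hipm, tinner_add_left, tinner_add_left,
            tinner_smul_left, tinner_smul_left, tinner_smul_left]
          have u1 : tinner (L.W (i+1)) (sylvOp A (L.V (n+1))) = if i + 1 = (n+1) then 1 else 0 :=
            IH' (i+1) (n+1) (by omega) (by omega) hp1 le_rfl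
          have u2 : tinner (L.W i) (sylvOp A (L.V (n+1))) = 0 := by
            rw [IH' i (n+1) hi1' (by omega) hp1 le_rfl, if_neg (by omega)]
          have u3 : L.δ i * tinner (L.W (i-1)) (sylvOp A (L.V (n+1))) = 0 := by
            rcases eq_or_lt_of_le hi1' with h1 | h1
            · rw [← h1, L.hδ1, zero_mul]
            · rw [IH' (i-1) (n+1) (by omega) (by omega) hp1 le_rfl, if_neg (by omega), mul_zero]
          rw [u1, u2, u3]; ring
        have t2 : tinner (L.W i) (sylvOp A (L.V (n+1))) = 0 := by
          rw [IH' i (n+1) hi1' (by omega) hp1 le_rfl, if_neg (by omega)]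
        have t3 : tinner (L.W i) (sylvOp A (L.V ((n+1)-1))) = if i = (n+1) - 1 then 1 else 0 :=
          IH' i ((n+1)-1) hi1' (by omega) (by omega) (by omega)
        rw [hA2, t2, t3]
        by_cases hc : i + 1 = (n+1)
        · rw [if_pos hc, if_pos (by omega), hc]; ring
        · rw [if_neg hc, if_neg (by omega)]; ring
    -- key3 : ⟨W ((n+1)+1), L V j⟩ = 0 for 1 ≤ j ≤ (n+1)
    have key3 : ∀ j, 1 ≤ j → j ≤ (n+1) → tinner (L.W ((n+1)+1)) (sylvOp A (L.V j)) = 0 := by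
      intro j hj1' hjp
      rw [L.hWnext (n+1) hp1 hpm, tinner_smul_left, L.hWb (n+1) hp1 hpm,
        tinner_sub_left, tinner_sub_left, tinner_smul_left, tinner_smul_left]
      have hjm : j ≤ m := by omega
      have term1 : tinner (sylvOpT A (L.W (n+1))) (sylvOp A (L.V j)) =
          L.δ (j+1) * (if (n+1) = j + 1 then 1 else 0) + L.α j * (if (n+1) = j then 1 else 0) := by
        rw [sylvT_adjoint, fact_LV L hj1' hjm, sylv_add, sylv_add, sylv_smul, sylv_smul,
          sylv_smul, tinner_add_right, tinner_add_right, tinner_smul_right,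
          tinner_smul_right, tinner_smul_right]
        have u1 : tinner (L.W (n+1)) (sylvOp A (L.V (j+1))) = if (n+1) = j + 1 then 1 else 0 := by
          rcases eq_or_lt_of_le hjp with hje | hlt
          · rw [hje, key2 (n+1) hp1 le_rfl, if_neg (by omega)]
          · exact IH' (n+1) (j+1) hp1 le_rfl (by omega) (by omega)
        have u2 : tinner (L.W (n+1)) (sylvOp A (L.V j)) = if (n+1) = j then 1 else 0 :=
          IH' (n+1) j hp1 le_rfl hj1' (by omega)
        have u3 : L.β j * tinner (L.W (n+1)) (sylvOp A (L.V (j-1))) = 0 := by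
          rcases eq_or_lt_of_le hj1' with h1 | h1
          · rw [← h1, L.hβ1, zero_mul]
          · rw [IH' (n+1) (j-1) hp1 le_rfl (by omega) (by omega), if_neg (by omega), mul_zero]
        rw [u1, u2, u3]; ring
      have term2 : tinner (L.W (n+1)) (sylvOp A (L.V j)) = if (n+1) = j then 1 else 0 :=
        IH' (n+1) j hp1 le_rfl hj1' (by omega)
      have term3 : tinner (L.W ((n+1)-1)) (sylvOp A (L.V j)) = if (n+1) = j + 1 then 1 else 0 := by
        rcases eq_or_lt_of_le hp1 with h1 | h1
        · rw [← h1]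
          simp only [Nat.sub_self, L.hW0, tinner_zero_left]
          rw [if_neg (by omega)]
        · rw [IH' ((n+1)-1) j (by omega) (by omega) hj1' (by omega)]
          by_cases hc : (n+1) = j + 1
          · rw [if_pos (by omega : (n+1) - 1 = j), if_pos hc]
          · rw [if_neg (by omega), if_neg hc]
      rw [term1, term2, term3]
      by_cases hc1 : (n+1) = j
      · rw [if_pos hc1, if_neg (by omega)]
        have hjn : j = n + 1 := hc1.symm
        subst hjn; ring
      · rw [if_neg hc1]
        by_cases hc2 : (n+1) = j + 1
        · rw [if_pos hc2]
          have hjn : j = n := by omega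
          subst hjn; ring
        · rw [if_neg hc2]; ring
    -- key4 : diagonal
    have key4 : tinner (L.W ((n+1)+1)) (sylvOp A (L.V ((n+1)+1))) = 1 := by
      have hδne := L.hδne (n+1) hp1 hpm
      have hβne := L.hβne (n+1) hp1 hpm
      have ht : L.δ ((n+1)+1) * L.β ((n+1)+1) =
          tinner (L.Wb ((n+1)+1)) (sylvOp A (L.Vb ((n+1)+1))) := by
        rw [L.hβ (n+1) hp1 hpm, mul_div_cancel₀ _ hδne]
      rw [L.hWnext (n+1) hp1 hpm, L.hVnext (n+1) hp1 hpm, tinner_smul_left, sylv_smul,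
        tinner_smul_right, ← ht]
      field_simp
    -- assembly
    rcases eq_or_lt_of_le hi2 with hie | hilt
    · rcases eq_or_lt_of_le hj2 with hje | hjlt
      · rw [hie, hje, key4, if_pos rfl]
      · rw [hie, key3 j hj1 (by omega), if_neg (by omega)]
    · rcases eq_or_lt_of_le hj2 with hje | hjlt
      · rw [hje, key2 i hi1 (by omega), if_neg (by omega)]
      · exact IH' i j hi1 (by omega) hj1 (by omega)

lemma keyT (L : LanczosData A m) {k i : ℕ} (hk1 : 1 ≤ k) (hkm : k ≤ m)
    (hi1 : 1 ≤ i) (him : i ≤ m) :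
    tinner (sylvOp A (sylvOp A (L.V k))) (L.W i) =
      if i = k then L.α k else if i = k + 1 then L.δ (k+1)
        else if i + 1 = k then L.β (i+1) else 0 := by
  have bio := biortho L m le_rfl
  rw [fact_LV L hk1 hkm, sylv_add, sylv_add, sylv_smul, sylv_smul, sylv_smul,
    tinner_add_left, tinner_add_left, tinner_smul_left, tinner_smul_left, tinner_smul_left]
  have u1 : tinner (sylvOp A (L.V (k+1))) (L.W i) = if i = k + 1 then 1 else 0 := by
    rw [tinner_comm]; exact bio i (k+1) hi1 (by omega) (by omega) (by omega)
  have u2 : tinner (sylvOp A (L.V k)) (L.W i) = if i = k then 1 else 0 := by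
    rw [tinner_comm]; exact bio i k hi1 (by omega) hk1 (by omega)
  have u3 : L.β k * tinner (sylvOp A (L.V (k-1))) (L.W i) =
      if i + 1 = k then L.β (i+1) else 0 := by
    rcases eq_or_lt_of_le hk1 with h1 | h1
    · rw [← h1, L.hβ1, zero_mul, if_neg (by omega)]
    · have : tinner (sylvOp A (L.V (k-1))) (L.W i) = if i = k - 1 then 1 else 0 := by
        rw [tinner_comm]; exact bio i (k-1) hi1 (by omega) (by omega) (by omega)
      rw [this]
      by_cases hc : i + 1 = k
      · rw [if_pos (by omega : i = k - 1), if_pos hc, mul_one]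
        congr 1; omega
      · rw [if_neg (by omega : ¬ i = k - 1), if_neg hc, mul_zero]
  rw [u1, u2, u3]
  split_ifs with h1 h2 h3 h4 h5 h6 h7 h8 h9 h10 h11 h12 <;>
    first
      | ring1
      | (exfalso; omega)

end TLBaux

/-- The `m × m` tridiagonal matrix `T_m` with (1-based) entries
`(T_m)_{jj} = α_j`, `(T_m)_{j,j-1} = δ_j`, `(T_m)_{j,j+1} = β_{j+1}`. -/
noncomputable def triMat (a d b : ℕ → ℝ) (m : ℕ) : Matrix (Fin m) (Fin m) ℝ :=
  Matrix.of fun i j =>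
    if (i : ℕ) = (j : ℕ) then a ((i : ℕ) + 1)
    else if (i : ℕ) = (j : ℕ) + 1 then d ((i : ℕ) + 1)
    else if (i : ℕ) + 1 = (j : ℕ) then b ((j : ℕ) + 1)
    else 0

/-- Galerkin condition of TLB: with `R₀ = D - L(X₀) ≠ 0` and
`V₁ = R₀/‖R₀‖`, the orthogonality conditions
`⟨D - L(X₀ + ∑ₖ yₖ Vₖ), L^T(W_i)⟩ = 0` for `i = 1,…,m` hold iff
`T_m y = ‖R₀‖ e₁`. -/
theorem tlb_galerkin {N : ℕ} (hN : 1 ≤ N) (I : Fin N → ℕ) (hI : ∀ n, 0 < I n)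
    (A : ∀ n, Matrix (Fin (I n)) (Fin (I n)) ℝ) (m : ℕ) (hm : 1 ≤ m)
    (L : LanczosData A m) (D X0 R0 : Tensor I)
    (hR0 : R0 = D - sylvOp A X0) (hR0ne : R0 ≠ 0)
    (hV1 : L.V 1 = (tnorm R0)⁻¹ • R0) (y : Fin m → ℝ) :
    (∀ i, 1 ≤ i → i ≤ m →
        tinner (D - sylvOp A (X0 + ∑ k : Fin m, y k • L.V ((k : ℕ) + 1)))
          (sylvOpT A (L.W i)) = 0) ↔
      (∀ i : Fin m, ∑ k : Fin m, triMat L.α L.δ L.β m i k * y k =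
        if (i : ℕ) = 0 then tnorm R0 else 0) := by
  have hnorm : tnorm R0 ≠ 0 := TLBaux.tnorm_ne_zero hR0ne
  have hR0V : R0 = tnorm R0 • L.V 1 := by
    rw [hV1, smul_smul, mul_inv_cancel₀ hnorm, one_smul]
  have bio := TLBaux.biortho L m le_rfl
  set S : Tensor I := ∑ k : Fin m, y k • L.V ((k : ℕ) + 1) with hS
  have central : ∀ i' : Fin m,
      tinner (D - sylvOp A (X0 + S)) (sylvOpT A (L.W ((i' : ℕ) + 1))) =
        (if (i' : ℕ) = 0 then tnorm R0 else 0) -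
          ∑ k : Fin m, triMat L.α L.δ L.β m i' k * y k := by
    intro i'
    have hi1 : 1 ≤ (i' : ℕ) + 1 := by omega
    have him : (i' : ℕ) + 1 ≤ m := i'.isLt
    have e1 : D - sylvOp A (X0 + S) = R0 - sylvOp A S := by
      rw [TLBaux.sylv_add, hR0]; abel
    rw [e1, TLBaux.tinner_sub_left]
    have f1 : tinner R0 (sylvOpT A (L.W ((i' : ℕ) + 1))) =
        if (i' : ℕ) = 0 then tnorm R0 else 0 := by
      have step : tinner R0 (sylvOpT A (L.W ((i' : ℕ) + 1))) =
          tnorm R0 * (if (i' : ℕ) + 1 = 1 then 1 else 0) := by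
        conv_lhs => rw [hR0V]
        rw [TLBaux.tinner_smul_left, ← TLBaux.sylv_adjoint, TLBaux.tinner_comm,
          bio ((i' : ℕ) + 1) 1 hi1 (by omega) (by omega) (by omega)]
      rw [step]
      by_cases h0 : (i' : ℕ) = 0
      · rw [if_pos (by omega), if_pos h0, mul_one]
      · rw [if_neg (by omega), if_neg h0, mul_zero]
    have f2 : tinner (sylvOp A S) (sylvOpT A (L.W ((i' : ℕ) + 1))) =
        ∑ k : Fin m, triMat L.α L.δ L.β m i' k * y k := by
      rw [← TLBaux.sylv_adjoint, hS, TLBaux.sylv_sum, TLBaux.sylv_sum,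
        TLBaux.tinner_sum_left]
      refine Finset.sum_congr rfl fun k _ => ?_
      rw [TLBaux.sylv_smul, TLBaux.sylv_smul, TLBaux.tinner_smul_left,
        TLBaux.keyT L (by omega) (by exact k.isLt) hi1 him, mul_comm]
      congr 1
      simp only [triMat, Matrix.of_apply]
      split_ifs <;> first | rfl | (exfalso; omega) | (congr 1 <;> omega)
    rw [f1, f2]
  constructor
  · intro h i'
    have hc := central i'
    rw [h ((i' : ℕ) + 1) (by omega) i'.isLt] at hc
    linarith
  · intro h i hi1 him
    have hc := central ⟨i - 1, by omega⟩
    have hh := h ⟨i - 1, by omega⟩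
    simp only [] at hc hh
    have hi : i - 1 + 1 = i := by omega
    rw [hi] at hc
    rw [hc]
    linarith
end

section
/- (Dual TLB residual formula, Eq. (4.3)) Suppose the Lanczos L-biorthogonalization data up to step m exists, D* and X_0* are tensors, R_0* = D* − L^T(X_0*) ≠ 0, W_1 = R_0*/‖R_0*‖, and y* ∈ ℝ^m satisfies the transposed tridiagonal system T_mᵀ y* = ‖R_0*‖ e_1. Then the dual iterate X_m* = X_0* + Σ_{k=1}^m y*_k W_k has residual D* − L^T(X_m*) = −β_{m+1} y*_m W_{m+1}, where y*_m is the last entry of y*. -/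
open scoped Matrix

/-- Auxiliary: the Sylvester operator as a linear map. -/
noncomputable def sylvLin {N : ℕ} {I : Fin N → ℕ}
    (A : ∀ n, Matrix (Fin (I n)) (Fin (I n)) ℝ) : Tensor I →ₗ[ℝ] Tensor I where
  toFun := sylvOp A
  map_add' X Y := by
    funext i
    simp [sylvOp, mul_add, Finset.sum_add_distrib]
  map_smul' c X := by
    funext i
    simp [sylvOp, Finset.mul_sum, mul_left_comm, smul_eq_mul]

/-- Auxiliary: a nonzero tensor has nonzero norm. -/
lemma tnorm_ne_zero {N : ℕ} {I : Fin N → ℕ} (X : Tensor I) (hX : X ≠ 0) :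
    tnorm X ≠ 0 := by
  have h1 : 0 < tinner X X := by
    obtain ⟨i, hi⟩ : ∃ i, X i ≠ 0 := by
      by_contra h
      push_neg at h
      exact hX (funext h)
    exact Finset.sum_pos' (fun j _ => mul_self_nonneg _)
      ⟨i, Finset.mem_univ i, mul_self_pos.mpr hi⟩
  exact ne_of_gt (Real.sqrt_pos.mpr h1)

/-- Auxiliary: closed form for a row of the transposed tridiagonal system. -/
lemma trirow (a d b : ℕ → ℝ) (m : ℕ) (ys : Fin m → ℝ) (y : ℕ → ℝ)
    (hy : ∀ k, y k = if h : k < m then ys ⟨k, h⟩ else 0) (i : Fin m) :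
    ∑ k : Fin m, (triMat a d b m)ᵀ i k * ys k =
      a ((i : ℕ) + 1) * y (i : ℕ) + d ((i : ℕ) + 2) * y ((i : ℕ) + 1) +
      (if (i : ℕ) = 0 then 0 else b ((i : ℕ) + 1) * y ((i : ℕ) - 1)) := by
  have key : ∀ k : Fin m, (triMat a d b m)ᵀ i k * ys k =
      (if k = i then a ((i : ℕ) + 1) * ys k else 0) +
      (if (k : ℕ) = (i : ℕ) + 1 then d ((k : ℕ) + 1) * ys k else 0) +
      (if (k : ℕ) + 1 = (i : ℕ) then b ((i : ℕ) + 1) * ys k else 0) := by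
    intro k
    simp only [Matrix.transpose_apply, triMat, Matrix.of_apply, Fin.ext_iff]
    split_ifs <;> first | omega | (simp_all; ring) | simp_all
  rw [Finset.sum_congr rfl fun k _ => key k]
  rw [Finset.sum_add_distrib, Finset.sum_add_distrib]
  congr 1
  · congr 1
    · rw [Finset.sum_ite_eq' Finset.univ i fun k => a ((i : ℕ) + 1) * ys k]
      simp [hy]
    · by_cases h : (i : ℕ) + 1 < m
      · have : ∀ k : Fin m, ((k : ℕ) = (i : ℕ) + 1) ↔ k = ⟨(i : ℕ) + 1, h⟩ := by
          intro k; rw [Fin.ext_iff]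
        simp_rw [this]
        rw [Finset.sum_ite_eq' Finset.univ (⟨(i : ℕ) + 1, h⟩ : Fin m)
          fun k => d ((k : ℕ) + 1) * ys k]
        simp [hy, h]
      · have h0 : ∀ k : Fin m, ¬ ((k : ℕ) = (i : ℕ) + 1) := by
          intro k hk; exact h (hk ▸ k.isLt)
        simp only [h0, if_false, Finset.sum_const_zero]
        rw [hy ((i : ℕ) + 1), dif_neg h, mul_zero]
  · by_cases h : (i : ℕ) = 0
    · have h0 : ∀ k : Fin m, ¬ ((k : ℕ) + 1 = (i : ℕ)) := by intro k; omega
      simp [h0, h]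
    · have hlt : (i : ℕ) - 1 < m := by omega
      have : ∀ k : Fin m, ((k : ℕ) + 1 = (i : ℕ)) ↔ k = ⟨(i : ℕ) - 1, hlt⟩ := by
        intro k; rw [Fin.ext_iff]; simp; omega
      simp_rw [this]
      rw [Finset.sum_ite_eq' Finset.univ (⟨(i : ℕ) - 1, hlt⟩ : Fin m)
        fun k => b ((i : ℕ) + 1) * ys k]
      simp [hy, hlt, h]

/-- dual TLB residual formula, Eq. (4.3): if `T_mᵀ y* = ‖R₀*‖ e₁`,
then the dual iterate `X_m* = X₀* + ∑ₖ y*ₖ Wₖ` has residual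
`D* - L^T(X_m*) = -β_{m+1} y*_m W_{m+1}`. -/
theorem tlb_dual_residual {N : ℕ} (hN : 1 ≤ N) (I : Fin N → ℕ) (hI : ∀ n, 0 < I n)
    (A : ∀ n, Matrix (Fin (I n)) (Fin (I n)) ℝ) (m : ℕ) (hm : 1 ≤ m)
    (L : LanczosData A m) (Ds X0s R0s : Tensor I)
    (hR0s : R0s = Ds - sylvOpT A X0s) (hR0sne : R0s ≠ 0)
    (hW1 : L.W 1 = (tnorm R0s)⁻¹ • R0s) (ys : Fin m → ℝ)
    (hys : ∀ i : Fin m, ∑ k : Fin m, (triMat L.α L.δ L.β m)ᵀ i k * ys k =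
      if (i : ℕ) = 0 then tnorm R0s else 0)
    (Xms : Tensor I) (hXms : Xms = X0s + ∑ k : Fin m, ys k • L.W ((k : ℕ) + 1)) :
    Ds - sylvOpT A Xms = -(L.β (m + 1) * ys ⟨m - 1, by omega⟩) • L.W (m + 1) := by
  set n := tnorm R0s with hn
  have hnne : n ≠ 0 := tnorm_ne_zero R0s hR0sne
  -- extended coefficient vector
  set y : ℕ → ℝ := fun k => if h : k < m then ys ⟨k, h⟩ else 0 with hy
  have hyd : ∀ k, y k = if h : k < m then ys ⟨k, h⟩ else 0 := fun k => rfl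
  have hy0 : ∀ k, m ≤ k → y k = 0 := fun k hk => dif_neg (by omega)
  -- row identities from the linear system
  have hrow : ∀ i : Fin m,
      L.α ((i : ℕ) + 1) * y (i : ℕ) + L.δ ((i : ℕ) + 2) * y ((i : ℕ) + 1) +
        (if (i : ℕ) = 0 then 0 else L.β ((i : ℕ) + 1) * y ((i : ℕ) - 1)) =
      if (i : ℕ) = 0 then n else 0 := fun i =>
    (trirow L.α L.δ L.β m ys y hyd i).symm.trans (hys i)
  -- the three-term recurrence for the W's
  have hrec : ∀ j, 1 ≤ j → j ≤ m → sylvOpT A (L.W j) =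
      (L.δ j) • L.W (j - 1) + (L.α j) • L.W j + (L.β (j + 1)) • L.W (j + 1) := by
    intro j h1 h2
    have hWbeq : L.Wb (j + 1) = L.β (j + 1) • L.W (j + 1) := by
      rw [L.hWnext j h1 h2, smul_smul, mul_inv_cancel₀ (L.hβne j h1 h2), one_smul]
    have h3 : sylvOpT A (L.W j) =
        L.Wb (j + 1) + L.α j • L.W j + L.δ j • L.W (j - 1) := by
      rw [L.hWb j h1 h2]; abel
    rw [h3, hWbeq]; abel
  -- the coefficient function
  set f : ℕ → ℝ := fun j => y j * L.δ (j + 1) + y (j - 1) * L.α j + y (j - 2) * L.β j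
    with hf
  -- main summation identity
  have hsum : ∑ k ∈ Finset.range m, y k • sylvOpT A (L.W (k + 1)) =
      n • L.W 1 + (L.β (m + 1) * y (m - 1)) • L.W (m + 1) := by
    have step1 : ∑ k ∈ Finset.range m, y k • sylvOpT A (L.W (k + 1)) =
        (∑ k ∈ Finset.range m, (y k * L.δ (k + 1)) • L.W k) +
        (∑ k ∈ Finset.range m, (y k * L.α (k + 1)) • L.W (k + 1)) +
        (∑ k ∈ Finset.range m, (y k * L.β (k + 2)) • L.W (k + 2)) := by
      rw [← Finset.sum_add_distrib, ← Finset.sum_add_distrib]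
      refine Finset.sum_congr rfl fun k hk => ?_
      have hk' := Finset.mem_range.mp hk
      rw [hrec (k + 1) (by omega) (by omega)]
      simp only [Nat.add_sub_cancel]
      rw [smul_add, smul_add, smul_smul, smul_smul, smul_smul]
    have b1 : ∑ k ∈ Finset.range m, (y k * L.δ (k + 1)) • L.W k =
        ∑ j ∈ Finset.range (m + 2), (y j * L.δ (j + 1)) • L.W j := by
      refine Finset.sum_subset (Finset.range_subset_range.mpr (by omega)) ?_
      intro j hj hj'
      rw [hy0 j (by simp at hj'; omega), zero_mul, zero_smul]
    have b2 : ∑ k ∈ Finset.range m, (y k * L.α (k + 1)) • L.W (k + 1) =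
        ∑ j ∈ Finset.range (m + 2), (y (j - 1) * L.α j) • L.W j := by
      rw [Finset.sum_range_succ' (fun j => (y (j - 1) * L.α j) • L.W j) (m + 1)]
      simp only [Nat.add_sub_cancel, L.hW0, smul_zero, add_zero]
      rw [Finset.sum_range_succ]
      rw [hy0 m le_rfl, zero_mul, zero_smul, add_zero]
    have b3 : ∑ k ∈ Finset.range m, (y k * L.β (k + 2)) • L.W (k + 2) =
        ∑ j ∈ Finset.range (m + 2), (y (j - 2) * L.β j) • L.W j := by
      rw [Finset.sum_range_succ' (fun j => (y (j - 2) * L.β j) • L.W j) (m + 1)]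
      rw [Finset.sum_range_succ' (fun j => (y (j + 1 - 2) * L.β (j + 1)) • L.W (j + 1)) m]
      simp only [L.hW0, smul_zero, add_zero, L.hβ1, mul_zero, zero_smul]
      rfl
    rw [step1, b1, b2, b3, ← Finset.sum_add_distrib, ← Finset.sum_add_distrib]
    have hstep2 : ∑ j ∈ Finset.range (m + 2),
        ((y j * L.δ (j + 1)) • L.W j + (y (j - 1) * L.α j) • L.W j +
          (y (j - 2) * L.β j) • L.W j) =
        ∑ j ∈ Finset.range (m + 2), f j • L.W j := by
      refine Finset.sum_congr rfl fun j _ => ?_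
      rw [hf]; simp only [← add_smul]
    rw [hstep2]
    have hm1 : (m + 1) ∈ Finset.range (m + 2) := Finset.mem_range.mpr (by omega)
    have h1mem : 1 ∈ (Finset.range (m + 2)).erase (m + 1) :=
      Finset.mem_erase.mpr ⟨by omega, Finset.mem_range.mpr (by omega)⟩
    rw [← Finset.add_sum_erase _ (fun j => f j • L.W j) hm1,
      ← Finset.add_sum_erase _ (fun j => f j • L.W j) h1mem]
    have hz : ∑ j ∈ ((Finset.range (m + 2)).erase (m + 1)).erase 1, f j • L.W j = 0 := by
      refine Finset.sum_eq_zero fun j hj => ?_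
      simp only [Finset.mem_erase, Finset.mem_range] at hj
      have hj1 := hj.1
      have hjm := hj.2.1
      have hjr := hj.2.2
      rcases Nat.eq_zero_or_pos j with h0 | hpos
      · subst h0; rw [L.hW0, smul_zero]
      · have hjm2 : 2 ≤ j ∧ j ≤ m := by constructor <;> omega
        have hlt : j - 1 < m := by omega
        have hr := hrow ⟨j - 1, hlt⟩
        simp only [Fin.val_mk] at hr
        rw [if_neg (by omega), if_neg (by omega)] at hr
        have e1 : j - 1 + 1 = j := by omega
        have e2 : j - 1 + 2 = j + 1 := by omega
        have e3 : j - 1 - 1 = j - 2 := by omega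
        rw [e1, e2, e3] at hr
        have : f j = 0 := by rw [hf]; simp only []; nlinarith [hr]
        rw [this, zero_smul]
    rw [hz, add_zero]
    have hf1 : f 1 = n := by
      have h0 := hrow ⟨0, by omega⟩
      simp only [Fin.val_mk, if_true, if_pos rfl, add_zero] at h0
      rw [hf]
      show y 1 * L.δ 2 + y 0 * L.α 1 + y 0 * L.β 1 = n
      rw [L.hβ1]; linarith [h0]
    have hfm1 : f (m + 1) = L.β (m + 1) * y (m - 1) := by
      rw [hf]
      show y (m + 1) * L.δ (m + 2) + y (m + 1 - 1) * L.α (m + 1) +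
        y (m + 1 - 2) * L.β (m + 1) = L.β (m + 1) * y (m - 1)
      rw [hy0 (m + 1) (by omega), Nat.add_sub_cancel, hy0 m le_rfl]
      have e : m + 1 - 2 = m - 1 := by omega
      rw [e]; ring
    rw [hf1, hfm1, add_comm]
  -- convert the Fin sum to a range sum
  have hfs : (∑ k : Fin m, ys k • L.W ((k : ℕ) + 1)) =
      ∑ k ∈ Finset.range m, y k • L.W (k + 1) := by
    rw [← Fin.sum_univ_eq_sum_range (fun k => y k • L.W (k + 1)) m]
    refine Finset.sum_congr rfl fun k _ => ?_
    rw [hyd (k : ℕ), dif_pos k.isLt]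
  -- linearity of sylvOpT
  have hlin : sylvOpT A Xms = sylvOpT A X0s +
      ∑ k ∈ Finset.range m, y k • sylvOpT A (L.W (k + 1)) := by
    rw [hXms, hfs]
    show sylvLin (fun n => (A n)ᵀ) (X0s + ∑ k ∈ Finset.range m, y k • L.W (k + 1)) = _
    rw [map_add, map_sum]
    simp only [map_smul]
    rfl
  -- R0s = n • W 1
  have hR0W : n • L.W 1 = R0s := by
    rw [hW1, smul_smul, mul_inv_cancel₀ hnne, one_smul]
  -- y (m-1) = ys ⟨m-1, _⟩
  have hym : y (m - 1) = ys ⟨m - 1, by omega⟩ := by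
    rw [hyd (m - 1), dif_pos (by omega : m - 1 < m)]
  rw [hlin, hsum, hR0W, hym]
  have hDX : Ds - sylvOpT A X0s = R0s := hR0s.symm
  rw [neg_smul]
  have : Ds - (sylvOpT A X0s + (R0s + (L.β (m + 1) * ys ⟨m - 1, by omega⟩) • L.W (m + 1)))
      = (Ds - sylvOpT A X0s) - R0s - (L.β (m + 1) * ys ⟨m - 1, by omega⟩) • L.W (m + 1) := by
    abel
  rw [this, hDX, sub_self, zero_sub]
end

section
/- (Theorem 3.2, finite termination of TBiCOR) Let M = I₁·I₂·⋯·I_N. Suppose the TBiCOR sequences are defined for n = 0,…,M and that ⟨R_n*, L(R_n)⟩ ≠ 0 and ⟨L^T(P_n*), L(P_n)⟩ ≠ 0 for n = 0,…,M−1 (no breakdown). Then R_M = 0; that is, the iterate X_M is an exact solution of the Sylvester tensor equation: L(X_M) = D. In particular, TBiCOR converges to an exact solution in at most M iteration steps. -/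
open scoped Matrix

namespace TBiCORAux

variable {N : ℕ} {I : Fin N → ℕ}

lemma tinner_add_left (X Y Z : Tensor I) : tinner (X + Y) Z = tinner X Z + tinner Y Z := by
  simp [tinner, add_mul, Finset.sum_add_distrib]

lemma tinner_sub_left (X Y Z : Tensor I) : tinner (X - Y) Z = tinner X Z - tinner Y Z := by
  simp [tinner, sub_mul, Finset.sum_sub_distrib]

lemma tinner_smul_left (c : ℝ) (X Y : Tensor I) : tinner (c • X) Y = c * tinner X Y := by
  simp [tinner, Finset.mul_sum, mul_assoc]

lemma tinner_add_right (X Y Z : Tensor I) : tinner X (Y + Z) = tinner X Y + tinner X Z := by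
  simp [tinner, mul_add, Finset.sum_add_distrib]

lemma tinner_sub_right (X Y Z : Tensor I) : tinner X (Y - Z) = tinner X Y - tinner X Z := by
  simp [tinner, mul_sub, Finset.sum_sub_distrib]

lemma tinner_smul_right (c : ℝ) (X Y : Tensor I) : tinner X (c • Y) = c * tinner X Y := by
  simp [tinner, Finset.mul_sum, mul_left_comm]

lemma tinner_zero_left (Y : Tensor I) : tinner (0 : Tensor I) Y = 0 := by simp [tinner]

lemma tinner_zero_right (X : Tensor I) : tinner X (0 : Tensor I) = 0 := by simp [tinner]

lemma tinner_sum_left {ι : Type*} (s : Finset ι) (f : ι → Tensor I) (Y : Tensor I) :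
    tinner (∑ j ∈ s, f j) Y = ∑ j ∈ s, tinner (f j) Y := by
  simp only [tinner, Finset.sum_apply, Finset.sum_mul]
  exact Finset.sum_comm

lemma tinner_sum_right {ι : Type*} (s : Finset ι) (X : Tensor I) (f : ι → Tensor I) :
    tinner X (∑ j ∈ s, f j) = ∑ j ∈ s, tinner X (f j) := by
  simp only [tinner, Finset.sum_apply, Finset.mul_sum]
  exact Finset.sum_comm

lemma tinner_self_eq_zero {X : Tensor I} (h : tinner X X = 0) : X = 0 := by
  funext i
  have h2 := (Finset.sum_eq_zero_iff_of_nonneg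
    (fun j _ => mul_self_nonneg (X j))).mp h i (Finset.mem_univ i)
  simpa using mul_self_eq_zero.mp h2

lemma sylvOp_add (A : ∀ n, Matrix (Fin (I n)) (Fin (I n)) ℝ) (X Y : Tensor I) :
    sylvOp A (X + Y) = sylvOp A X + sylvOp A Y := by
  funext i; simp [sylvOp, mul_add, Finset.sum_add_distrib]

lemma sylvOp_smul (A : ∀ n, Matrix (Fin (I n)) (Fin (I n)) ℝ) (c : ℝ) (X : Tensor I) :
    sylvOp A (c • X) = c • sylvOp A X := by
  funext i; simp [sylvOp, Finset.mul_sum, mul_left_comm]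

lemma sylvOp_sub (A : ∀ n, Matrix (Fin (I n)) (Fin (I n)) ℝ) (X Y : Tensor I) :
    sylvOp A (X - Y) = sylvOp A X - sylvOp A Y := by
  funext i; simp [sylvOp, mul_sub, Finset.sum_sub_distrib]

lemma sylvOpT_add (A : ∀ n, Matrix (Fin (I n)) (Fin (I n)) ℝ) (X Y : Tensor I) :
    sylvOpT A (X + Y) = sylvOpT A X + sylvOpT A Y := sylvOp_add _ X Y

lemma sylvOpT_smul (A : ∀ n, Matrix (Fin (I n)) (Fin (I n)) ℝ) (c : ℝ) (X : Tensor I) :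
    sylvOpT A (c • X) = c • sylvOpT A X := sylvOp_smul _ c X

noncomputable def sylvLM (A : ∀ n, Matrix (Fin (I n)) (Fin (I n)) ℝ) :
    Tensor I →ₗ[ℝ] Tensor I where
  toFun := sylvOp A
  map_add' := sylvOp_add A
  map_smul' c X := by simpa using sylvOp_smul A c X

def updEquiv (n : Fin N) : ((∀ m, Fin (I m)) × Fin (I n)) ≃ ((∀ m, Fin (I m)) × Fin (I n)) where
  toFun p := (Function.update p.1 n p.2, p.1 n)
  invFun p := (Function.update p.1 n p.2, p.1 n)
  left_inv p := by simp
  right_inv p := by simp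

lemma tinner_adj (A : ∀ n, Matrix (Fin (I n)) (Fin (I n)) ℝ) (X Y : Tensor I) :
    tinner (sylvOpT A X) Y = tinner X (sylvOp A Y) := by
  unfold tinner sylvOpT sylvOp
  simp only [Finset.sum_mul, Finset.mul_sum, Matrix.transpose_apply]
  rw [Finset.sum_comm]
  conv_rhs => rw [Finset.sum_comm]
  refine Finset.sum_congr rfl fun n _ => ?_
  rw [← Fintype.sum_prod_type', ← Fintype.sum_prod_type']
  refine Fintype.sum_equiv (updEquiv n) _ _ fun p => ?_
  obtain ⟨i, j⟩ := p
  simp [updEquiv]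
  ring

end TBiCORAux

open TBiCORAux

/-- The (T)BiCOR sequences, defined for `n = 0,…,k`, for abstract operators
`Lop` (the Sylvester operator, possibly preconditioned) and `LopT` (its transpose). -/
structure BiCORSeq {N : ℕ} {I : Fin N → ℕ}
    (Lop LopT : Tensor I → Tensor I) (D X0 : Tensor I) (k : ℕ) where
  X : ℕ → Tensor I
  R : ℕ → Tensor I
  Rs : ℕ → Tensor I
  P : ℕ → Tensor I
  Ps : ℕ → Tensor I
  a : ℕ → ℝ
  b : ℕ → ℝ
  hX0 : X 0 = X0
  hR0 : R 0 = D - Lop X0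
  hRs0 : Rs 0 = Lop (R 0)
  hP0 : P 0 = R 0
  hPs0 : Ps 0 = Rs 0
  ha : ∀ n, n < k →
    a n = tinner (Rs n) (Lop (R n)) / tinner (LopT (Ps n)) (Lop (P n))
  hX : ∀ n, n < k → X (n + 1) = X n + a n • P n
  hR : ∀ n, n < k → R (n + 1) = R n - a n • Lop (P n)
  hRs : ∀ n, n < k → Rs (n + 1) = Rs n - a n • LopT (Ps n)
  hb : ∀ n, n < k →
    b n = tinner (Rs (n + 1)) (Lop (R (n + 1))) / tinner (Rs n) (Lop (R n))
  hP : ∀ n, n < k → P (n + 1) = R (n + 1) + b n • P n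
  hPs : ∀ n, n < k → Ps (n + 1) = Rs (n + 1) + b n • Ps n

/-- Theorem 3.2, finite termination of TBiCOR: with
`M = I₁ ⋯ I_N` and no breakdown for `n = 0,…,M-1`, the residual `R_M = 0`,
i.e. `X_M` is an exact solution: `L(X_M) = D`. -/
theorem tbicor_finite_termination {N : ℕ} (hN : 1 ≤ N) (I : Fin N → ℕ)
    (hI : ∀ n, 0 < I n)
    (A : ∀ n, Matrix (Fin (I n)) (Fin (I n)) ℝ)
    (D X0 : Tensor I) (M : ℕ) (hM : M = ∏ n, I n)
    (T : BiCORSeq (sylvOp A) (sylvOpT A) D X0 M)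
    (hnb1 : ∀ n, n < M → tinner (T.Rs n) (sylvOp A (T.R n)) ≠ 0)
    (hnb2 : ∀ n, n < M → tinner (sylvOpT A (T.Ps n)) (sylvOp A (T.P n)) ≠ 0) :
    T.R M = 0 ∧ sylvOp A (T.X M) = D := by
  -- basic scalar facts
  have ha_ne : ∀ m, m < M → T.a m ≠ 0 := by
    intro m hm
    rw [T.ha m hm]
    exact div_ne_zero (hnb1 m hm) (hnb2 m hm)
  have hnum_den : ∀ m, m < M →
      T.a m * tinner (sylvOpT A (T.Ps m)) (sylvOp A (T.P m))
        = tinner (T.Rs m) (sylvOp A (T.R m)) := by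
    intro m hm
    rw [T.ha m hm]
    exact div_mul_cancel₀ _ (hnb2 m hm)
  have hb_num : ∀ m, m < M →
      tinner (T.Rs (m + 1)) (sylvOp A (T.R (m + 1)))
        = T.b m * tinner (T.Rs m) (sylvOp A (T.R m)) := by
    intro m hm
    rw [T.hb m hm]
    rw [div_mul_cancel₀ _ (hnb1 m hm)]
  have key1 : ∀ m, m < M → ∀ Z : Tensor I,
      T.a m * tinner (sylvOpT A (T.Ps m)) Z
        = tinner (T.Rs m) Z - tinner (T.Rs (m + 1)) Z := by
    intro m hm Z
    have e : T.a m • sylvOpT A (T.Ps m) = T.Rs m - T.Rs (m + 1) := by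
      rw [T.hRs m hm]; abel
    rw [← tinner_smul_left, e, tinner_sub_left]
  have key2 : ∀ m, m < M → ∀ Z : Tensor I,
      T.a m * tinner Z (sylvOp A (sylvOp A (T.P m)))
        = tinner Z (sylvOp A (T.R m)) - tinner Z (sylvOp A (T.R (m + 1))) := by
    intro m hm Z
    have e : sylvOp A (T.R (m + 1))
        = sylvOp A (T.R m) - T.a m • sylvOp A (sylvOp A (T.P m)) := by
      rw [T.hR m hm, sylvOp_sub, sylvOp_smul]
    rw [e, tinner_sub_right, tinner_smul_right]; ring
  -- the big biorthogonality induction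
  have main : ∀ n, n ≤ M →
      (∀ m, m < n → tinner (T.Ps m) (sylvOp A (T.R n)) = 0) ∧
      (∀ m, m < n → tinner (T.Rs n) (sylvOp A (T.P m)) = 0) ∧
      (∀ m, m < n → tinner (T.Rs m) (sylvOp A (T.R n)) = 0) ∧
      (∀ m, m < n → tinner (T.Rs n) (sylvOp A (T.R m)) = 0) ∧
      (∀ m, m < n → tinner (sylvOpT A (T.Ps m)) (sylvOp A (T.P n)) = 0) ∧
      (∀ m, m < n → tinner (sylvOpT A (T.Ps n)) (sylvOp A (T.P m)) = 0) := by
    intro n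
    induction n with
    | zero =>
      exact fun _ => ⟨fun m h => absurd h (Nat.not_lt_zero m),
        fun m h => absurd h (Nat.not_lt_zero m), fun m h => absurd h (Nat.not_lt_zero m),
        fun m h => absurd h (Nat.not_lt_zero m), fun m h => absurd h (Nat.not_lt_zero m),
        fun m h => absurd h (Nat.not_lt_zero m)⟩
    | succ n ih =>
      intro hn1
      have hnM : n < M := hn1
      obtain ⟨h1, h2, o1, o2, h3, h4⟩ := ih (Nat.le_of_lt hnM)
      have hPsRn : tinner (T.Ps n) (sylvOp A (T.R n))
          = tinner (T.Rs n) (sylvOp A (T.R n)) := by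
        cases n with
        | zero => rw [T.hPs0]
        | succ k =>
          rw [T.hPs k (by omega), tinner_add_left, tinner_smul_left,
            h1 k (by omega), mul_zero, add_zero]
      have hRsPn : tinner (T.Rs n) (sylvOp A (T.P n))
          = tinner (T.Rs n) (sylvOp A (T.R n)) := by
        cases n with
        | zero => rw [T.hP0]
        | succ k =>
          rw [T.hP k (by omega), sylvOp_add, sylvOp_smul, tinner_add_right,
            tinner_smul_right, h2 k (by omega), mul_zero, add_zero]
      -- H1 at n+1
      have h1' : ∀ m, m < n + 1 → tinner (T.Ps m) (sylvOp A (T.R (n + 1))) = 0 := by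
        intro m hm
        rw [T.hR n hnM, sylvOp_sub, sylvOp_smul, tinner_sub_right, tinner_smul_right,
          (tinner_adj A (T.Ps m) (sylvOp A (T.P n))).symm]
        rcases Nat.lt_succ_iff_lt_or_eq.mp hm with h | h
        · rw [h1 m h, h3 m h]; ring
        · subst h
          rw [hPsRn, ← hnum_den _ hnM]; ring
      -- H2 at n+1
      have h2' : ∀ m, m < n + 1 → tinner (T.Rs (n + 1)) (sylvOp A (T.P m)) = 0 := by
        intro m hm
        rw [T.hRs n hnM, tinner_sub_left, tinner_smul_left]
        rcases Nat.lt_succ_iff_lt_or_eq.mp hm with h | h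
        · rw [h2 m h, h4 m h]; ring
        · subst h
          rw [hRsPn, ← hnum_den _ hnM]; ring
      -- O1 at n+1
      have o1' : ∀ m, m < n + 1 → tinner (T.Rs m) (sylvOp A (T.R (n + 1))) = 0 := by
        intro m hm
        cases m with
        | zero => rw [← T.hPs0]; exact h1' 0 hm
        | succ k =>
          have hk : k < M := by omega
          have e : T.Rs (k + 1) = T.Ps (k + 1) - T.b k • T.Ps k := by
            rw [T.hPs k hk]; abel
          rw [e, tinner_sub_left, tinner_smul_left, h1' (k + 1) hm, h1' k (by omega)]
          ring
      -- O2 at n+1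
      have o2' : ∀ m, m < n + 1 → tinner (T.Rs (n + 1)) (sylvOp A (T.R m)) = 0 := by
        intro m hm
        cases m with
        | zero => rw [← T.hP0]; exact h2' 0 hm
        | succ k =>
          have hk : k < M := by omega
          have e : T.R (k + 1) = T.P (k + 1) - T.b k • T.P k := by
            rw [T.hP k hk]; abel
          rw [e, sylvOp_sub, sylvOp_smul, tinner_sub_right, tinner_smul_right,
            h2' (k + 1) hm, h2' k (by omega)]
          ring
      -- H3 at n+1
      have h3' : ∀ m, m < n + 1 →
          tinner (sylvOpT A (T.Ps m)) (sylvOp A (T.P (n + 1))) = 0 := by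
        intro m hm
        have hmM : m < M := by omega
        rw [T.hP n hnM, sylvOp_add, sylvOp_smul, tinner_add_right, tinner_smul_right]
        rcases Nat.lt_succ_iff_lt_or_eq.mp hm with h | h
        · have t1 : T.a m * tinner (sylvOpT A (T.Ps m)) (sylvOp A (T.R (n + 1))) = 0 := by
            rw [key1 m hmM, o1' m (by omega), o1' (m + 1) (by omega)]; ring
          have t1' := (mul_eq_zero.mp t1).resolve_left (ha_ne m hmM)
          rw [t1', h3 m h]; ring
        · subst h
          have t1 : T.a m * tinner (sylvOpT A (T.Ps m)) (sylvOp A (T.R (m + 1)))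
              = -(T.b m * tinner (T.Rs m) (sylvOp A (T.R m))) := by
            rw [key1 m hnM, o1' m (by omega), hb_num m hnM]; ring
          have t2 := hnum_den m hnM
          have hsuff : T.a m * (tinner (sylvOpT A (T.Ps m)) (sylvOp A (T.R (m + 1)))
              + T.b m * tinner (sylvOpT A (T.Ps m)) (sylvOp A (T.P m))) = 0 := by
            rw [mul_add, t1, mul_left_comm, t2]; ring
          exact (mul_eq_zero.mp hsuff).resolve_left (ha_ne m hnM)
      -- H4 at n+1
      have h4' : ∀ m, m < n + 1 →
          tinner (sylvOpT A (T.Ps (n + 1))) (sylvOp A (T.P m)) = 0 := by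
        intro m hm
        have hmM : m < M := by omega
        rw [T.hPs n hnM, sylvOpT_add, sylvOpT_smul, tinner_add_left, tinner_smul_left,
          tinner_adj]
        rcases Nat.lt_succ_iff_lt_or_eq.mp hm with h | h
        · have t1 : T.a m * tinner (T.Rs (n + 1)) (sylvOp A (sylvOp A (T.P m))) = 0 := by
            rw [key2 m hmM, o2' m (by omega), o2' (m + 1) (by omega)]; ring
          have t1' := (mul_eq_zero.mp t1).resolve_left (ha_ne m hmM)
          rw [t1', h4 m h]; ring
        · subst h
          have t1 : T.a m * tinner (T.Rs (m + 1)) (sylvOp A (sylvOp A (T.P m)))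
              = -(T.b m * tinner (T.Rs m) (sylvOp A (T.R m))) := by
            rw [key2 m hnM, o2' m (by omega), hb_num m hnM]; ring
          have t2 := hnum_den m hnM
          have hsuff : T.a m * (tinner (T.Rs (m + 1)) (sylvOp A (sylvOp A (T.P m)))
              + T.b m * tinner (sylvOpT A (T.Ps m)) (sylvOp A (T.P m))) = 0 := by
            rw [mul_add, t1, mul_left_comm, t2]; ring
          exact (mul_eq_zero.mp hsuff).resolve_left (ha_ne m hnM)
      exact ⟨h1', h2', o1', o2', h3', h4'⟩
  -- full biorthogonality
  have biorth : ∀ i j : ℕ, i < M → j ≤ M → i ≠ j →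
      tinner (T.Rs i) (sylvOp A (T.R j)) = 0 := by
    intro i j hi hj hij
    rcases lt_or_gt_of_ne hij with h | h
    · exact (main j hj).2.2.1 i h
    · exact (main i (Nat.le_of_lt hi)).2.2.2.1 j h
  -- dimension facts
  have hM1 : 0 < M := by
    rw [hM]; exact Finset.prod_pos fun n _ => hI n
  have : Nonempty (Fin M) := ⟨⟨0, hM1⟩⟩
  have hcard : Fintype.card (Fin M) = Module.finrank ℝ (Tensor I) := by
    rw [Module.finrank_fintype_fun_eq_card, Fintype.card_fin, Fintype.card_pi]
    simp [hM]
  -- linear independence of (Rs i)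
  have hw : LinearIndependent ℝ (fun i : Fin M => T.Rs i) := by
    rw [Fintype.linearIndependent_iff]
    intro c hc i
    have h0 : tinner (∑ j : Fin M, c j • T.Rs (j : ℕ)) (sylvOp A (T.R i)) = 0 := by
      rw [hc, tinner_zero_left]
    rw [tinner_sum_left] at h0
    simp only [tinner_smul_left] at h0
    rw [Finset.sum_eq_single i (fun j _ hj => by
      rw [biorth j i j.isLt (Nat.le_of_lt i.isLt)
        (fun h => hj (Fin.val_injective h)), mul_zero])
      (fun h => absurd (Finset.mem_univ i) h)] at h0
    exact (mul_eq_zero.mp h0).resolve_right (hnb1 i i.isLt)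
  -- linear independence of (L (R j))
  have hv : LinearIndependent ℝ (fun j : Fin M => sylvOp A (T.R j)) := by
    rw [Fintype.linearIndependent_iff]
    intro c hc i
    have h0 : tinner (T.Rs i) (∑ j : Fin M, c j • sylvOp A (T.R (j : ℕ))) = 0 := by
      rw [hc, tinner_zero_right]
    rw [tinner_sum_right] at h0
    simp only [tinner_smul_right] at h0
    rw [Finset.sum_eq_single i (fun j _ hj => by
      rw [biorth i j i.isLt (Nat.le_of_lt j.isLt)
        (fun h => hj (Fin.val_injective h.symm)), mul_zero])
      (fun h => absurd (Finset.mem_univ i) h)] at h0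
    exact (mul_eq_zero.mp h0).resolve_right (hnb1 i i.isLt)
  -- surjectivity, hence injectivity, of the Sylvester operator
  have hspan : Submodule.span ℝ (Set.range fun j : Fin M => sylvOp A (T.R j)) = ⊤ := by
    rw [← coe_basisOfLinearIndependentOfCardEqFinrank hv hcard]
    exact Module.Basis.span_eq _
  have hsurj : Function.Surjective (sylvLM A (I := I)) := by
    rw [← LinearMap.range_eq_top]
    refine top_unique ?_
    rw [← hspan]
    refine Submodule.span_le.mpr ?_
    rintro _ ⟨j, rfl⟩
    exact ⟨T.R j, rfl⟩
  have hinj : Function.Injective (sylvLM A (I := I)) :=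
    LinearMap.injective_iff_surjective.mpr hsurj
  -- L (R M) is orthogonal to a spanning family, hence zero
  have hwspan := coe_basisOfLinearIndependentOfCardEqFinrank hw hcard
  set Bw := basisOfLinearIndependentOfCardEqFinrank hw hcard with hBw
  have hallw : ∀ Y : Tensor I, tinner Y (sylvOp A (T.R M)) = 0 := by
    intro Y
    conv_lhs => rw [← Bw.sum_repr Y]
    rw [tinner_sum_left]
    refine Finset.sum_eq_zero fun i _ => ?_
    rw [tinner_smul_left]
    have : (Bw i : Tensor I) = T.Rs i := by rw [hwspan]
    rw [this, (main M le_rfl).2.2.1 i i.isLt, mul_zero]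
  have hLRM : sylvOp A (T.R M) = 0 :=
    tinner_self_eq_zero (hallw (sylvOp A (T.R M)))
  have hRM : T.R M = 0 := by
    have : sylvLM A (I := I) (T.R M) = 0 := hLRM
    exact ((LinearMap.map_eq_zero_iff _ hinj).mp this)
  -- residual identity
  have hres : ∀ n, n ≤ M → T.R n = D - sylvOp A (T.X n) := by
    intro n
    induction n with
    | zero => intro _; rw [T.hR0, T.hX0]
    | succ k ih =>
      intro h
      have hk : k < M := h
      rw [T.hR k hk, ih (Nat.le_of_lt hk), T.hX k hk, sylvOp_add, sylvOp_smul]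
      abel
  refine ⟨hRM, ?_⟩
  have h := hres M le_rfl
  rw [hRM] at h
  have := sub_eq_zero.mp h.symm
  exact this.symm
end
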